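/- For every positive integer n and every choice of n distinct prime numbers p_1, …, p_n, there exists an indecomposable involutive non-degenerate set-theoretic solution (X, r) of the Yang–Baxter equation with |X| = p_1⋯p_n which is a multipermutation solution of multipermutation level exactly n, and such that |𝒢(X,r)| = p_1 · p_2^{p_1} · p_3^{p_1p_2} ⋯ p_n^{p_1⋯p_{n−1}}. -/

import Mathlib

open Equiv Pointwise

universe u v

/-- An involutive non-degenerate set-theoretic solution of the Yang–Baxter equation on `X`,
presented by its family of bijections `σ x` (`x ∈ X`), subject to the condition
`σ_x ∘ σ_{σ_x⁻¹(y)} = σ_y ∘ σ_{σ_y⁻¹(x)}`; the solution itself is recovered as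
`r (x, y) = (σ x y, (σ (σ x y))⁻¹ x)`. -/
structure YBE (X : Type u) where
  σ : X → Equiv.Perm X
  ybe : ∀ x y : X, σ x * σ ((σ x)⁻¹ y) = σ y * σ ((σ y)⁻¹ x)

namespace YBE

variable {X : Type u} {Y : Type v}

/-- The permutation group `𝒢(X,r)` of a solution. -/
def permGroup (S : YBE X) : Subgroup (Equiv.Perm X) :=
  Subgroup.closure (Set.range S.σ)

/-- `(X,r)` is indecomposable if `𝒢(X,r)` acts transitively on `X`. -/
def Indecomposable (S : YBE X) : Prop :=
  ∀ x y : X, ∃ g ∈ S.permGroup, g x = y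

/-- Homomorphism of solutions. -/
def IsHom (S : YBE X) (T : YBE Y) (f : X → Y) : Prop :=
  ∀ x y : X, f (S.σ x y) = T.σ (f x) (f y)

/-- `T` is (a copy of) the retract `Ret(X,r)` of `S`: there is a surjective homomorphism
of solutions identifying points with equal `σ`'s, and only those. -/
def IsRetract (S : YBE X) (T : YBE Y) : Prop :=
  ∃ f : X → Y, Function.Surjective f ∧ S.IsHom T f ∧
    ∀ x x' : X, f x = f x' ↔ S.σ x = S.σ x'

/-- `Retⁿ(X,r)` has cardinality one, i.e. the multipermutation level is at most `n`. -/
def MPLevelLE : ℕ → (X : Type u) → YBE X → Prop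
  | 0, X, _ => Nonempty X ∧ Subsingleton X
  | n + 1, _, S => ∃ (Z : Type u) (T : YBE Z), S.IsRetract T ∧ MPLevelLE n Z T

/-- `(X,r)` is a multipermutation solution: `Retⁿ(X,r)` has cardinality one
for some positive integer `n`. -/
def IsMultipermutation (S : YBE X) : Prop :=
  ∃ n : ℕ, 0 < n ∧ MPLevelLE n X S

/-- `m` is the multipermutation level of `(X,r)`: it is the least positive integer
with `|Retᵐ(X,r)| = 1`. -/
def MPLevelExact (S : YBE X) (m : ℕ) : Prop :=
  0 < m ∧ MPLevelLE m X S ∧ ∀ k : ℕ, 0 < k → MPLevelLE k X S → m ≤ k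

/-- A simple solution: `|X| > 1` and every epimorphic image is either an isomorphic copy
or a singleton. -/
def IsSimple (S : YBE X) : Prop :=
  1 < Nat.card X ∧ ∀ (Z : Type u) (T : YBE Z) (f : X → Z),
    S.IsHom T f → Function.Surjective f → (Function.Bijective f ∨ Nat.card Z = 1)

end YBE

/-- The orbit `H(x) = {t(x) : t ∈ H}` of `x ∈ X` under a subgroup `H` of a permutation
group `G ≤ Sym(X)`. -/
def orbIn {X : Type u} {G : Subgroup (Equiv.Perm X)} (H : Subgroup ↥G) (x : X) : Set X :=
  {y | ∃ t : ↥G, t ∈ H ∧ (t : Equiv.Perm X) x = y}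

/-- The "orbit" `A(x) = {t(x) : t ∈ A}` of `x ∈ X` under a subset `A` of a permutation
group `G ≤ Sym(X)`. -/
def orbSet {X : Type u} {G : Subgroup (Equiv.Perm X)} (A : Set ↥G) (x : X) : Set X :=
  {y | ∃ t ∈ A, ((t : Equiv.Perm X)) x = y}

/-- A left-brace structure on a group `G`: an abelian group operation `add` (whose neutral
element is `1`) satisfying the brace compatibility `a∘(b+c) + a = a∘b + a∘c`, where `∘` is the
given group operation of `G`.  In other words, this makes `G` a left brace whose
multiplicative group is `G`. -/
structure BraceOps (G : Type*) [Group G] where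
  add : G → G → G
  neg : G → G
  add_assoc : ∀ a b c, add (add a b) c = add a (add b c)
  add_comm : ∀ a b, add a b = add b a
  zero_add : ∀ a, add 1 a = a
  neg_add_cancel : ∀ a, add (neg a) a = 1
  compat : ∀ a b c, add (a * add b c) a = add (a * b) (a * c)

namespace BraceOps

variable {G : Type*} [Group G]

/-- The lambda map `λ_a(b) = -a + a∘b` of a left brace. -/
def lam (β : BraceOps G) (a b : G) : G :=
  β.add (β.neg a) (a * b)

/-- Natural multiples with respect to the additive structure of the brace. -/
def nsmul (β : BraceOps G) : ℕ → G → G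
  | 0, _ => 1
  | n + 1, a => β.add a (β.nsmul n a)

/-- The socle `Soc(B) = {a : a∘b = a + b for all b}` of a left brace. -/
def socle (β : BraceOps G) : Set G :=
  {a | ∀ b : G, a * b = β.add a b}

/-- The Sylow `q`-subgroup (i.e. the `q`-primary component) of the additive group of a
finite left brace. -/
def addSylow (β : BraceOps G) (q : ℕ) : Set G :=
  {a | ∃ k : ℕ, β.nsmul (q ^ k) a = 1}

/-- `A` is a subgroup of the additive group of the brace. -/
def IsAddSubgroup (β : BraceOps G) (A : Set G) : Prop :=
  1 ∈ A ∧ (∀ a ∈ A, ∀ b ∈ A, β.add a b ∈ A) ∧ ∀ a ∈ A, β.neg a ∈ A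

/-- A left ideal of a left brace: an additive subgroup stable under all `λ_a`. -/
def IsLeftIdeal (β : BraceOps G) (L : Set G) : Prop :=
  β.IsAddSubgroup L ∧ ∀ a : G, ∀ b ∈ L, β.lam a b ∈ L

/-- An ideal of a left brace: a normal subgroup of the multiplicative group stable
under all `λ_a`. -/
def IsIdeal (β : BraceOps G) (I : Set G) : Prop :=
  1 ∈ I ∧ (∀ a ∈ I, ∀ b ∈ I, a * b ∈ I) ∧ (∀ a ∈ I, a⁻¹ ∈ I) ∧
    (∀ g : G, ∀ a ∈ I, g * a * g⁻¹ ∈ I) ∧ ∀ g : G, ∀ a ∈ I, β.lam g a ∈ I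

end BraceOps

namespace YBE

variable {X : Type u}

/-- `σ x` as an element of `𝒢(X,r)`. -/
def σg (S : YBE X) (x : X) : ↥S.permGroup :=
  ⟨S.σ x, Subgroup.subset_closure (Set.mem_range_self x)⟩

/-- The natural left-brace structure on `𝒢(X,r)`: the unique left brace structure whose
multiplicative group is `𝒢(X,r)`, whose additive group is generated by `{σ_x : x ∈ X}`,
and whose lambda map satisfies `λ_g(σ_y) = σ_{g(y)}`. -/
structure IsNaturalBrace (S : YBE X) (β : BraceOps ↥S.permGroup) : Prop where
  lam_sigma : ∀ (g : ↥S.permGroup) (y : X),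
    β.lam g (S.σg y) = S.σg ((g : Equiv.Perm X) y)
  add_gen : ∀ A : Set ↥S.permGroup, β.IsAddSubgroup A → (∀ x : X, S.σg x ∈ A) →
    ∀ g : ↥S.permGroup, g ∈ A

/-- The product `P_{τ(1)} P_{τ(2)} ⋯ P_{τ(i)}` of Sylow subgroups of the additive group of
the left brace `𝒢(X,r)`, taken inside the multiplicative group. -/
def sylProdTake (S : YBE X) (β : BraceOps ↥S.permGroup) {n : ℕ} (p : Fin n → ℕ)
    (τ : Equiv.Perm (Fin n)) (i : ℕ) : Set ↥S.permGroup :=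
  ((List.ofFn fun j : Fin n => β.addSylow (p (τ j))).take i).prod

/-- The product `P_{i+1} P_{i+2} ⋯ P_n` of Sylow subgroups of the additive group of the
left brace `𝒢(X,r)`, taken inside the multiplicative group. -/
def sylProdDrop (S : YBE X) (β : BraceOps ↥S.permGroup) {n : ℕ} (p : Fin n → ℕ)
    (i : ℕ) : Set ↥S.permGroup :=
  ((List.ofFn fun j : Fin n => β.addSylow (p j)).drop i).prod

end YBE

/-- The holomorph `ℤ/(q) ⋊ Aut(ℤ/(q))` of the cyclic group of order `q`. -/
abbrev Hol (q : ℕ) :=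
  SemidirectProduct (Multiplicative (ZMod q)) (MulAut (Multiplicative (ZMod q)))
    (MonoidHom.id (MulAut (Multiplicative (ZMod q))))

/-- Kronecker delta `δ_{u,w} ∈ ℤ/(q)`. -/
noncomputable def kdelta (q : ℕ) {α : Type v} (u w : α) : ZMod q :=
  letI := Classical.propDecidable (u = w)
  if u = w then 1 else 0

/-- The map `σ'_{(a,x)}(b,y) = (b + δ_{x,σ_x(y)}, σ_x(y))` on `ℤ/(q) × Y`. -/
noncomputable def extMap {Y : Type v} (T : YBE Y) (q : ℕ) (a b : ZMod q × Y) :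
    ZMod q × Y :=
  (b.1 + kdelta q a.2 (T.σ a.2 b.2), T.σ a.2 b.2)

/-!
Iterating the extension `σ'_{(a,x)}(b,y) = (b + δ_{x,σ_x(y)}, σ_x(y))` of a solution on `Y`
to one on `ℤ/(q) × Y`, starting from the one-point solution, gives a solution on
`ℤ/(pₙ) × ⋯ × ℤ/(p₁)`. Forgetting the new coordinate is the retraction of an extension, and
retracts are unique up to isomorphism, so `n` extensions have multipermutation level exactly `n`.

All permutations of an extension are "twists" `(b, y) ↦ (b + f y, g y)` with `g ∈ 𝒢(Y)`. If `q`
is a prime not dividing `|Y|`, every such twist lies in `𝒢`, which gives transitivity and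
`|𝒢| = q^|Y| · |𝒢(Y)|`; it suffices to obtain all translations `f`. Let `Y = ℤ/(q') × Y'` be
itself an extension. Its `σ_{(a,x)}` depends on `x` only, so quotients of generators give the
differences `δ_u - δ_{u'}` for `u, u'` in one fibre of `Y → Y'`, and these span the functions
with vanishing fibre sums. Summing over fibres maps `𝒢` of the extension of `Y` onto `𝒢` of the
extension of `Y'` by `ℤ/(q)`, which contains all translations by induction; taking `q'`-th
powers, `q'` being invertible modulo `q`, then realises every fibre sum.
-/

open Function

section Twist

variable {A Y : Type*} [AddCommGroup A]

def twist (f : Y → A) (g : Perm Y) : Perm (A × Y) where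
  toFun v := (v.1 + f v.2, g v.2)
  invFun v := (v.1 - f (g⁻¹ v.2), g⁻¹ v.2)
  left_inv := by rintro ⟨a, y⟩; simp
  right_inv := by rintro ⟨a, y⟩; simp

@[simp] lemma twist_apply (f : Y → A) (g : Perm Y) (v : A × Y) :
    twist f g v = (v.1 + f v.2, g v.2) := rfl

@[simp] lemma twist_inv_apply (f : Y → A) (g : Perm Y) (v : A × Y) :
    (twist f g)⁻¹ v = (v.1 - f (g⁻¹ v.2), g⁻¹ v.2) := rfl

lemma twist_mul (f f' : Y → A) (g g' : Perm Y) :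
    twist f g * twist f' g' = twist (f' + f ∘ g') (g * g') := by
  ext v <;> simp [add_assoc]

lemma twist_zero_one : twist (0 : Y → A) 1 = 1 := by
  ext v <;> simp

lemma twist_inv (f : Y → A) (g : Perm Y) : (twist f g)⁻¹ = twist (-(f ∘ ⇑g⁻¹)) g⁻¹ :=
  inv_eq_of_mul_eq_one_right <| by simp [twist_mul, twist_zero_one]

lemma twist_inj {f f' : Y → A} {g g' : Perm Y} :
    twist f g = twist f' g' ↔ f = f' ∧ g = g' := by
  refine ⟨fun h => ?_, fun ⟨hf, hg⟩ => hf ▸ hg ▸ rfl⟩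
  have h0 (y : Y) := congrArg (fun π : Perm (A × Y) => π (0, y)) h
  simp only [twist_apply, zero_add, Prod.mk.injEq] at h0
  exact ⟨funext fun y => (h0 y).1, Equiv.ext fun y => (h0 y).2⟩

lemma twist_pow (f : Y → A) (g : Perm Y) (k : ℕ) :
    twist f g ^ k = twist (∑ j ∈ Finset.range k, f ∘ ⇑(g ^ j)) (g ^ k) := by
  induction k with
  | zero => simp [twist_zero_one]
  | succ k ih =>
    rw [pow_succ, ih, twist_mul, ← pow_succ, Finset.sum_range_succ', add_comm]
    congr 2
    ext y
    simp [pow_succ]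

lemma twist_one_pow (f : Y → A) (k : ℕ) : twist f 1 ^ k = twist (k • f) 1 := by
  simp [twist_pow]

variable (A) in
def twistSubgroup (G : Subgroup (Perm Y)) : Subgroup (Perm (A × Y)) where
  carrier := {π | ∃ f, ∃ g ∈ G, twist f g = π}
  one_mem' := ⟨0, 1, G.one_mem, twist_zero_one⟩
  mul_mem' := by
    rintro _ _ ⟨f, g, hg, rfl⟩ ⟨f', g', hg', rfl⟩
    exact ⟨_, _, G.mul_mem hg hg', (twist_mul f f' g g').symm⟩
  inv_mem' := by
    rintro _ ⟨f, g, hg, rfl⟩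
    exact ⟨_, _, G.inv_mem hg, (twist_inv f g).symm⟩

lemma twist_mem_twistSubgroup {G : Subgroup (Perm Y)} (f : Y → A) {g : Perm Y} (hg : g ∈ G) :
    twist f g ∈ twistSubgroup A G :=
  ⟨f, g, hg, rfl⟩

lemma twistSubgroup_transitive {G : Subgroup (Perm Y)} (hG : ∀ x y, ∃ g ∈ G, g x = y)
    (v w : A × Y) : ∃ π ∈ twistSubgroup A G, π v = w := by
  obtain ⟨g, hg, hgv⟩ := hG v.2 w.2
  refine ⟨twist (fun _ => w.1 - v.1) g, twist_mem_twistSubgroup _ hg, ?_⟩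
  simp [hgv]

lemma Nat.card_twistSubgroup [Finite Y] (G : Subgroup (Perm Y)) :
    Nat.card (twistSubgroup A G) = Nat.card A ^ Nat.card Y * Nat.card G := by
  have hinj : Injective fun fg : (Y → A) × G => twist fg.1 (fg.2 : Perm Y) := by
    rintro ⟨f, g⟩ ⟨f', g'⟩ h
    obtain ⟨hf, hg⟩ := twist_inj.1 h
    exact Prod.ext hf (Subtype.ext hg)
  have hrange : Set.range (fun fg : (Y → A) × G => twist fg.1 (fg.2 : Perm Y)) =
      twistSubgroup A G := by
    ext π
    exact ⟨fun ⟨⟨f, g⟩, h⟩ => ⟨f, g, g.2, h⟩, fun ⟨f, g, hg, h⟩ => ⟨(f, ⟨g, hg⟩), h⟩⟩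
  rw [← SetLike.coe_sort_coe, ← hrange, Nat.card_range_of_injective hinj, Nat.card_prod,
    Nat.card_fun]

def translations (W : Subgroup (Perm (A × Y))) : AddSubgroup (Y → A) where
  carrier := {f | twist f 1 ∈ W}
  zero_mem' := by simp [twist_zero_one, W.one_mem]
  add_mem' {f f'} hf hf' := by
    have : twist (f + f') 1 = twist f 1 * twist f' 1 := by simp [twist_mul, add_comm]
    simpa [this] using W.mul_mem hf hf'
  neg_mem' {f} hf := by
    have : twist (-f) 1 = (twist f 1)⁻¹ := by simp [twist_inv]
    simpa [this] using W.inv_mem hf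

lemma mem_translations {W : Subgroup (Perm (A × Y))} {f : Y → A} :
    f ∈ translations W ↔ twist f 1 ∈ W :=
  Iff.rfl

end Twist

section FiberSum

variable {B Y A : Type*} [Fintype B] [AddCommGroup A]

def fiberSum : (B × Y → A) →+ (Y → A) where
  toFun f y := ∑ b, f (b, y)
  map_zero' := by ext; simp
  map_add' f f' := by ext; simp [Finset.sum_add_distrib]

lemma fiberSum_apply (f : B × Y → A) (y : Y) : fiberSum f y = ∑ b, f (b, y) :=
  rfl

lemma fiberSum_comp_twist [AddCommGroup B] (f : B × Y → A) (t : Y → B) (g : Perm Y) :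
    fiberSum (f ∘ twist t g) = fiberSum f ∘ g := by
  ext y
  exact Equiv.sum_comp (Equiv.addRight (t y)) (fun b => f (b, g y))

end FiberSum

section Kdelta

variable {α : Type*}

@[simp] lemma kdelta_self (q : ℕ) (u : α) : kdelta q u u = 1 := by
  simp [kdelta]

lemma kdelta_of_ne (q : ℕ) {u w : α} (h : u ≠ w) : kdelta q u w = 0 := by
  simp [kdelta, h]

@[simp] lemma kdelta_apply_apply (q : ℕ) (e : Perm α) (u w : α) :
    kdelta q (e u) (e w) = kdelta q u w := by
  by_cases h : u = w
  · simp [h]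
  · rw [kdelta_of_ne q h, kdelta_of_ne q (e.injective.ne h)]

lemma sum_smul_kdelta [Fintype α] (q : ℕ) (d : α → ZMod q) :
    ∑ u, d u • kdelta q u = d := by
  ext v
  rw [Finset.sum_apply, Finset.sum_eq_single v (fun u _ hu => by simp [kdelta_of_ne q hu])
    (by simp)]
  simp

lemma fiberSum_kdelta {B Y : Type*} [Fintype B] (q : ℕ) (b : B) (y : Y) :
    fiberSum (kdelta q (b, y)) = kdelta q y := by
  ext z
  by_cases h : y = z
  · subst h
    rw [fiberSum_apply, Finset.sum_eq_single b
      (fun c _ hc => kdelta_of_ne q (by simp [Ne.symm hc])) (by simp)]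
    simp
  · rw [fiberSum_apply, kdelta_of_ne q h]
    exact Finset.sum_eq_zero fun c _ => kdelta_of_ne q (by simp [h])

end Kdelta

lemma exists_equiv_apply_eq_of_surjective {α β γ : Type*} {f : α → β} {f' : α → γ}
    (hf : Surjective f) (hf' : Surjective f') (h : ∀ x y, f x = f y ↔ f' x = f' y) :
    ∃ e : β ≃ γ, ∀ x, e (f x) = f' x := by
  have key (x : α) : f' (surjInv hf (f x)) = f' x := (h _ _).1 (surjInv_eq hf _)
  refine ⟨Equiv.ofBijective (f' ∘ surjInv hf) ⟨fun z w hzw => ?_, fun z => ?_⟩, key⟩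
  · obtain ⟨x, rfl⟩ := hf z
    obtain ⟨y, rfl⟩ := hf w
    exact (h x y).2 (by simpa only [comp_apply, key] using hzw)
  · obtain ⟨x, rfl⟩ := hf' z
    exact ⟨f x, key x⟩

namespace YBE

lemma σ_mem_permGroup {X : Type u} (S : YBE X) (x : X) : S.σ x ∈ S.permGroup :=
  Subgroup.subset_closure (Set.mem_range_self x)

/-- `(T.extension q).σ u` is the map `extMap T q u`. -/
noncomputable def extension {Y : Type u} (T : YBE Y) (q : ℕ) : YBE (ZMod q × Y) where
  σ u := twist (kdelta q u.2 ∘ T.σ u.2) (T.σ u.2)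
  ybe := by
    rintro ⟨a, x⟩ ⟨b, y⟩
    simp only [twist_inv_apply, twist_mul]
    rw [T.ybe x y]
    congr 1
    ext z
    have hρ := congrArg (· z) (T.ybe x y)
    simp only [Perm.mul_apply, Perm.coe_inv] at hρ
    simp only [Pi.add_apply, comp_apply, Perm.coe_inv]
    -- applying `σ_x` turns `δ_{σ_x⁻¹ y}` into `δ_y`: both sides become `δ_x + δ_y` at the same point
    rw [← kdelta_apply_apply q (T.σ x) ((T.σ x).symm y),
      ← kdelta_apply_apply q (T.σ y) ((T.σ y).symm x), apply_symm_apply, apply_symm_apply, hρ,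
      add_comm]

section PermGroup

variable {Y : Type u} (T : YBE Y) (q : ℕ)

lemma extension_σ (u : ZMod q × Y) :
    (T.extension q).σ u = twist (kdelta q u.2 ∘ T.σ u.2) (T.σ u.2) :=
  rfl

lemma permGroup_extension_le :
    (T.extension q).permGroup ≤ twistSubgroup (ZMod q) T.permGroup :=
  (Subgroup.closure_le _).2 <| by
    rintro _ ⟨u, rfl⟩
    exact twist_mem_twistSubgroup _ (T.σ_mem_permGroup u.2)

lemma exists_twist_mem_permGroup_extension {g : Perm Y} (hg : g ∈ T.permGroup) :
    ∃ f, twist f g ∈ (T.extension q).permGroup := by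
  induction hg using Subgroup.closure_induction with
  | mem g hg =>
    obtain ⟨x, rfl⟩ := hg
    exact ⟨_, (T.extension q).σ_mem_permGroup (0, x)⟩
  | one => exact ⟨0, twist_zero_one (A := ZMod q) ▸ one_mem _⟩
  | mul g g' _ _ ih ih' =>
    obtain ⟨f, hf⟩ := ih
    obtain ⟨f', hf'⟩ := ih'
    exact ⟨_, twist_mul f f' g g' ▸ mul_mem hf hf'⟩
  | inv g _ ih =>
    obtain ⟨f, hf⟩ := ih
    exact ⟨_, twist_inv f g ▸ inv_mem hf⟩

lemma permGroup_extension_eq_of_translations_eq_top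
    (h : translations (T.extension q).permGroup = ⊤) :
    (T.extension q).permGroup = twistSubgroup (ZMod q) T.permGroup := by
  refine le_antisymm (T.permGroup_extension_le q) ?_
  rintro _ ⟨f, g, hg, rfl⟩
  obtain ⟨f₁, hf₁⟩ := T.exists_twist_mem_permGroup_extension q hg
  have hsplit : twist ((f - f₁) ∘ ⇑g⁻¹) 1 * twist f₁ g = twist f g := by
    rw [twist_mul, twist_inj]
    constructor
    · ext y
      simp
    · exact one_mul g
  rw [← hsplit]
  exact mul_mem (mem_translations.1 (h ▸ AddSubgroup.mem_top _)) hf₁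

lemma translations_extension_eq_top_of_subsingleton [NeZero q] [Subsingleton Y] [Nonempty Y] :
    translations (T.extension q).permGroup = ⊤ := by
  refine (AddSubgroup.eq_top_iff' _).2 fun f => ?_
  obtain ⟨y₀⟩ := ‹Nonempty Y›
  have hσ : (T.extension q).σ (0, y₀) = twist 1 1 := by
    rw [extension_σ, twist_inj]
    exact ⟨funext fun y => by simp [Subsingleton.elim (T.σ y₀ y) y₀], Subsingleton.elim _ _⟩
  have hf : f = (f y₀).val • (1 : Y → ZMod q) := by
    ext y
    simp [Subsingleton.elim y y₀]
  rw [mem_translations, hf, ← twist_one_pow, ← hσ]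
  exact pow_mem ((T.extension q).σ_mem_permGroup _) _

lemma sub_kdelta_mem_translations {u u' : Y} (h : T.σ u = T.σ u') :
    kdelta q u - kdelta q u' ∈ translations (T.extension q).permGroup := by
  have hquot : (T.extension q).σ (0, u) * ((T.extension q).σ (0, u'))⁻¹ =
      twist (kdelta q u - kdelta q u') 1 := by
    simp only [extension_σ, h, twist_inv, twist_mul, mul_inv_cancel]
    congr 1
    ext v
    simp [sub_eq_neg_add]
  rw [mem_translations, ← hquot]
  exact mul_mem (σ_mem_permGroup _ _) (inv_mem (σ_mem_permGroup _ _))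

variable (q' : ℕ) [NeZero q']

lemma exists_lift_of_mem_permGroup_extension {π : Perm (ZMod q × Y)}
    (hπ : π ∈ (T.extension q).permGroup) :
    ∃ (f : ZMod q' × Y → ZMod q) (t : Y → ZMod q') (g : Perm Y),
      twist f (twist t g) ∈ ((T.extension q').extension q).permGroup ∧
        π = twist (fiberSum f) g := by
  induction hπ using Subgroup.closure_induction with
  | mem π hπ =>
    obtain ⟨⟨c, x⟩, rfl⟩ := hπ
    refine ⟨_, _, _, ((T.extension q').extension q).σ_mem_permGroup (0, (0, x)), ?_⟩
    simp only [extension_σ, fiberSum_comp_twist, fiberSum_kdelta]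
  | one => exact ⟨0, 0, 1, by simp [twist_zero_one], by simp [twist_zero_one]⟩
  | mul π₁ π₂ _ _ ih₁ ih₂ =>
    obtain ⟨f₁, t₁, g₁, hW₁, rfl⟩ := ih₁
    obtain ⟨f₂, t₂, g₂, hW₂, rfl⟩ := ih₂
    have hW := mul_mem hW₁ hW₂
    rw [twist_mul, twist_mul] at hW
    refine ⟨_, _, _, hW, ?_⟩
    rw [twist_mul, map_add, fiberSum_comp_twist]
  | inv π _ ih =>
    obtain ⟨f, t, g, hW, rfl⟩ := ih
    have hW' := inv_mem hW
    rw [twist_inv, twist_inv] at hW'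
    refine ⟨_, _, _, hW', ?_⟩
    rw [twist_inv, map_neg, fiberSum_comp_twist]

lemma exists_mem_translations_fiberSum_eq (hq' : IsUnit (q' : ZMod q))
    (hT : (T.extension q).permGroup = twistSubgroup (ZMod q) T.permGroup) (e : Y → ZMod q) :
    ∃ h ∈ translations ((T.extension q').extension q).permGroup, fiberSum h = e := by
  obtain ⟨r, hr⟩ := hq'.exists_right_inv
  obtain ⟨f, t, g, hW, heq⟩ := T.exists_lift_of_mem_permGroup_extension q q'
    (hT ▸ twist_mem_twistSubgroup (r • e) (one_mem _))
  obtain ⟨hfe, rfl⟩ := twist_inj.1 heq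
  have hqt : q' • t = 0 := by
    ext y
    simp
  refine ⟨∑ j ∈ Finset.range q', f ∘ ⇑(twist t 1 ^ j), ?_, ?_⟩
  · have := pow_mem hW q'
    rwa [twist_pow, twist_one_pow, hqt, twist_zero_one] at this
  · simp only [map_sum, twist_one_pow, fiberSum_comp_twist, Perm.coe_one, comp_id,
      Finset.sum_const, Finset.card_range, ← hfe]
    ext y
    simp [← mul_assoc, hr]

lemma mem_translations_of_fiberSum_eq_zero [Finite Y] {d : ZMod q' × Y → ZMod q}
    (hd : fiberSum d = 0) : d ∈ translations ((T.extension q').extension q).permGroup := by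
  have := Fintype.ofFinite Y
  have hdecomp : ∑ u, d u • (kdelta q u - kdelta q ((0 : ZMod q'), u.2)) = d := by
    have hfib : ∑ u : ZMod q' × Y, d u • kdelta q ((0 : ZMod q'), u.2) = 0 := by
      simp_rw [Fintype.sum_prod_type_right, ← Finset.sum_smul, ← fiberSum_apply, hd]
      simp
    simp [smul_sub, Finset.sum_sub_distrib, sum_smul_kdelta, hfib]
  rw [← hdecomp]
  exact AddSubgroup.sum_mem _ fun u _ => ZMod.smul_mem
    ((T.extension q').sub_kdelta_mem_translations q (u := u) (u' := (0, u.2)) rfl) _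

lemma translations_extension_extension_eq_top [Finite Y] (hq' : IsUnit (q' : ZMod q))
    (hT : (T.extension q).permGroup = twistSubgroup (ZMod q) T.permGroup) :
    translations ((T.extension q').extension q).permGroup = ⊤ := by
  refine (AddSubgroup.eq_top_iff' _).2 fun h => ?_
  obtain ⟨F, hF, hFh⟩ := T.exists_mem_translations_fiberSum_eq q q' hq' hT (fiberSum h)
  have hker : fiberSum (h - F) = 0 := by rw [map_sub, hFh, sub_self]
  simpa using add_mem (T.mem_translations_of_fiberSum_eq_zero q q' hker) hF

end PermGroup

def Tower : List ℕ → Type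
  | [] => PUnit
  | q :: l => ZMod q × Tower l

noncomputable def tower : (l : List ℕ) → YBE (Tower l)
  | [] => ⟨fun _ => 1, fun _ _ => rfl⟩
  | q :: l => (tower l).extension q

instance : (l : List ℕ) → Nonempty (Tower l)
  | [] => inferInstanceAs (Nonempty PUnit)
  | q :: l => have := instNonemptyTower l; inferInstanceAs (Nonempty (ZMod q × Tower l))

instance : Subsingleton (Tower []) :=
  inferInstanceAs (Subsingleton PUnit)

lemma card_tower : ∀ {l : List ℕ}, 0 ∉ l → Nat.card (Tower l) = l.prod
  | [], _ => Nat.card_unique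
  | q :: l, hl => by
    have : NeZero q := ⟨fun h => hl (h ▸ List.mem_cons_self)⟩
    rw [List.prod_cons, ← card_tower (l := l) (fun h => hl (List.mem_cons_of_mem q h))]
    exact (Nat.card_prod _ _).trans (by rw [Nat.card_zmod])

lemma finite_tower {l : List ℕ} (hl : 0 ∉ l) : Finite (Tower l) :=
  Nat.finite_of_card_ne_zero (by rw [card_tower hl]; exact List.prod_ne_zero hl)

theorem permGroup_tower_cons {q : ℕ} (hq : q.Prime) :
    ∀ {l : List ℕ}, (∀ p ∈ l, p.Prime) → q ∉ l →
      (tower (q :: l)).permGroup = twistSubgroup (ZMod q) (tower l).permGroup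
  | [], _, _ => by
    have : NeZero q := ⟨hq.ne_zero⟩
    exact permGroup_extension_eq_of_translations_eq_top _ _
      (translations_extension_eq_top_of_subsingleton (tower []) q)
  | q' :: l, hl, hql => by
    have hq' : q'.Prime := hl q' List.mem_cons_self
    have : NeZero q' := ⟨hq'.ne_zero⟩
    have := finite_tower (l := l) fun h => Nat.not_prime_zero (hl 0 (List.mem_cons_of_mem _ h))
    have hunit : IsUnit (q' : ZMod q) := by
      rw [ZMod.isUnit_iff_coprime, Nat.coprime_primes hq' hq]
      exact fun h => hql (h ▸ List.mem_cons_self)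
    exact permGroup_extension_eq_of_translations_eq_top _ _
      (translations_extension_extension_eq_top (tower l) q q' hunit
        (permGroup_tower_cons hq (fun p hp => hl p (List.mem_cons_of_mem _ hp))
          (fun h => hql (List.mem_cons_of_mem _ h))))

theorem indecomposable_tower : ∀ {l : List ℕ}, (∀ p ∈ l, p.Prime) → l.Nodup →
    (tower l).Indecomposable
  | [], _, _ => fun _ _ => ⟨1, one_mem _, Subsingleton.elim _ _⟩
  | q :: l, hl, hnd => by
    intro v w
    rw [permGroup_tower_cons (hl q List.mem_cons_self)
      (fun p hp => hl p (List.mem_cons_of_mem _ hp)) (List.nodup_cons.1 hnd).1]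
    exact twistSubgroup_transitive
      (indecomposable_tower (fun p hp => hl p (List.mem_cons_of_mem _ hp))
        (List.nodup_cons.1 hnd).2) v w

lemma card_permGroup_tower_cons {q : ℕ} (hq : q.Prime) {l : List ℕ} (hl : ∀ p ∈ l, p.Prime)
    (hql : q ∉ l) :
    Nat.card (tower (q :: l)).permGroup = q ^ l.prod * Nat.card (tower l).permGroup := by
  have hl0 : 0 ∉ l := fun h => Nat.not_prime_zero (hl 0 h)
  have := finite_tower hl0
  rw [permGroup_tower_cons hq hl hql]
  exact (Nat.card_twistSubgroup (A := ZMod q) _).trans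
    (by rw [Nat.card_zmod, card_tower hl0])

theorem card_permGroup_tower_reverse_ofFn : ∀ {n : ℕ} (p : Fin n → ℕ), (∀ i, (p i).Prime) →
    Injective p →
      Nat.card (tower (List.ofFn p).reverse).permGroup = ∏ i, p i ^ ∏ j ∈ Finset.Iio i, p j
  | 0, p, _, _ => by
    rw [List.ofFn_zero]
    simp only [List.reverse_nil, Finset.univ_eq_empty, Finset.prod_empty]
    exact Nat.card_of_subsingleton (1 : (tower []).permGroup)
  | n + 1, p, hp, hinj => by
    have hmem {a : ℕ} : a ∈ (List.ofFn fun i : Fin n => p i.castSucc).reverse ↔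
        ∃ i : Fin n, p i.castSucc = a := by
      simp
    have hl : ∀ a ∈ (List.ofFn fun i : Fin n => p i.castSucc).reverse, a.Prime := by
      rintro a ha
      obtain ⟨i, rfl⟩ := hmem.1 ha
      exact hp _
    have hlast : p (Fin.last n) ∉ (List.ofFn fun i : Fin n => p i.castSucc).reverse := by
      rintro h
      obtain ⟨i, hi⟩ := hmem.1 h
      exact (Fin.castSucc_lt_last i).ne (hinj hi)
    rw [List.ofFn_succ', List.concat_eq_append, List.reverse_append, List.reverse_singleton,
      List.singleton_append, card_permGroup_tower_cons (hp _) hl hlast,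
      card_permGroup_tower_reverse_ofFn _ (fun i => hp _) (hinj.comp (Fin.castSucc_injective n)),
      List.prod_reverse, List.prod_ofFn, Fin.prod_univ_castSucc, Fin.Iio_last_eq_map,
      Finset.prod_map]
    simp only [Fin.Iio_castSucc, Finset.prod_map]
    exact mul_comm _ _

section Retract

variable {X Y Z : Type u} {S : YBE X} {T : YBE Y} {T' : YBE Z}

lemma IsHom.σ_eq_of_σ_eq {f : X → Y} (hf : S.IsHom T f) (hsurj : Surjective f) {a b : X}
    (h : S.σ a = S.σ b) : T.σ (f a) = T.σ (f b) := by
  ext z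
  obtain ⟨c, rfl⟩ := hsurj z
  rw [← hf, ← hf, h]

lemma IsHom.symm {e : Y ≃ Z} (he : T.IsHom T' e) : T'.IsHom T e.symm := fun z w => by
  rw [e.symm_apply_eq, he, e.apply_symm_apply, e.apply_symm_apply]

lemma IsRetract.exists_equiv (h : S.IsRetract T) (h' : S.IsRetract T') :
    ∃ e : Y ≃ Z, T.IsHom T' e := by
  obtain ⟨f, hfs, hfh, hf⟩ := h
  obtain ⟨f', hfs', hfh', hf'⟩ := h'
  obtain ⟨e, he⟩ := exists_equiv_apply_eq_of_surjective hfs hfs' fun x y =>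
    (hf x y).trans (hf' x y).symm
  refine ⟨e, fun z w => ?_⟩
  obtain ⟨x, rfl⟩ := hfs z
  obtain ⟨y, rfl⟩ := hfs w
  rw [← hfh, he, he, he, hfh']

lemma MPLevelLE.of_equiv {k : ℕ} (e : Y ≃ Z) (he : T.IsHom T' e) (h : MPLevelLE k Y T) :
    MPLevelLE k Z T' := by
  cases k with
  | zero =>
    have := h.2
    exact ⟨h.1.map e, e.symm.subsingleton⟩
  | succ k =>
    obtain ⟨W, U, ⟨g, hgs, hgh, hg⟩, hk⟩ := h
    refine ⟨W, U, ⟨g ∘ e.symm, hgs.comp e.symm.surjective, fun z w => ?_, fun z w => ?_⟩, hk⟩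
    · simp only [comp_apply, he.symm z w]
      exact hgh _ _
    · rw [comp_apply, comp_apply, hg]
      exact ⟨fun h => by simpa using he.σ_eq_of_σ_eq e.surjective h,
        he.symm.σ_eq_of_σ_eq e.symm.surjective⟩

lemma MPLevelLE.of_isRetract {k : ℕ} (hT : S.IsRetract T) (h : MPLevelLE (k + 1) X S) :
    MPLevelLE k Y T := by
  obtain ⟨W, U, hU, hk⟩ := h
  obtain ⟨e, he⟩ := hU.exists_equiv hT
  exact hk.of_equiv e he

lemma isRetract_extension (T : YBE Y) (q : ℕ) [Nontrivial (ZMod q)] :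
    (T.extension q).IsRetract T := by
  refine ⟨Prod.snd, fun y => ⟨(0, y), rfl⟩, fun _ _ => rfl,
    fun u u' => ⟨fun h => ?_, fun h => ?_⟩⟩
  · simp [extension_σ, h]
  · have happ := congrArg (fun π => π (0, (T.σ u.2)⁻¹ u.2)) h
    simp only [extension_σ, twist_apply, comp_apply, Perm.coe_inv, apply_symm_apply, kdelta_self,
      zero_add, Prod.mk.injEq] at happ
    obtain ⟨h1, h2⟩ := happ
    rw [← h2] at h1
    by_contra hne
    exact one_ne_zero (h1.trans (kdelta_of_ne q (Ne.symm hne)))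

end Retract

lemma mpLevelLE_tower : ∀ {l : List ℕ}, 1 ∉ l → MPLevelLE l.length (Tower l) (tower l)
  | [], _ => ⟨inferInstance, inferInstance⟩
  | q :: l, hl =>
    have : Nontrivial (ZMod q) := ZMod.nontrivial_iff.2 fun h => hl (h ▸ List.mem_cons_self)
    ⟨Tower l, tower l, isRetract_extension (tower l) q,
      mpLevelLE_tower fun h => hl (List.mem_cons_of_mem q h)⟩

lemma not_mpLevelLE_tower : ∀ {l : List ℕ}, 1 ∉ l → ∀ {k : ℕ}, k < l.length →
    ¬ MPLevelLE k (Tower l) (tower l)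
  | q :: l, hl, k, hk => by
    have : Nontrivial (ZMod q) := ZMod.nontrivial_iff.2 fun h => hl (h ▸ List.mem_cons_self)
    cases k with
    | zero => exact fun h => not_subsingleton (ZMod q × Tower l) h.2
    | succ k =>
      exact fun h => not_mpLevelLE_tower (fun h => hl (List.mem_cons_of_mem q h))
        (Nat.lt_of_succ_lt_succ hk) (h.of_isRetract (isRetract_extension (tower l) q))

theorem mpLevelExact_tower {l : List ℕ} (hl : 1 ∉ l) (hne : l ≠ []) :
    (tower l).MPLevelExact l.length :=
  ⟨List.length_pos_of_ne_nil hne, mpLevelLE_tower hl,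
    fun _ _ hk => not_lt.1 fun hlt => not_mpLevelLE_tower hl hlt hk⟩

end YBE

/-- For every positive `n` and distinct primes `p 0, …, p (n-1)` there is an
indecomposable solution of cardinality `p 0 ⋯ p (n-1)` of multipermutation level exactly `n`
with `|𝒢(X,r)| = p₁ · p₂^{p₁} · p₃^{p₁p₂} ⋯ pₙ^{p₁⋯p_{n-1}}`. -/
theorem statement14 {n : ℕ} (hn : 0 < n) (p : Fin n → ℕ)
    (hp : ∀ i, Nat.Prime (p i)) (hinj : Function.Injective p) :
    ∃ (X : Type) (S : YBE X),
      Nat.card X = Finset.univ.prod p ∧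
      S.Indecomposable ∧
      S.MPLevelExact n ∧
      Nat.card ↥S.permGroup =
        Finset.univ.prod (fun i : Fin n =>
          p i ^ (Finset.prod (Finset.filter (fun j => j < i) Finset.univ) p)) := by
  set l := (List.ofFn p).reverse
  have hl : ∀ q ∈ l, q.Prime := by
    intro q hq
    obtain ⟨i, rfl⟩ := List.mem_ofFn.1 (List.mem_reverse.1 hq)
    exact hp i
  have hlen : l.length = n := by simp [l]
  refine ⟨YBE.Tower l, YBE.tower l, ?_,
    YBE.indecomposable_tower hl (List.nodup_reverse.2 (List.nodup_ofFn.2 hinj)), ?_, ?_⟩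
  · rw [YBE.card_tower fun h => Nat.not_prime_zero (hl 0 h), List.prod_reverse, List.prod_ofFn]
  · rw [← hlen]
    exact YBE.mpLevelExact_tower (fun h => Nat.not_prime_one (hl 1 h))
      (List.ne_nil_of_length_pos (hlen ▸ hn))
  · simpa only [Finset.filter_gt_eq_Iio] using YBE.card_permGroup_tower_reverse_ofFn p hp hinj
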